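/- arXiv:2404.18803 — 3 statements merged into one kernel-verified Lean document; each statement's English description precedes it below -/
import Mathlib

section
/- Let C(k,j) = C(k, (k+j)/2)² − C(k, (k+j)/2 − 1)·C(k, (k+j)/2 + 1) (binomial coefficients), the number of pairs of ordered simple random walk paths of length k from 0 to j. For integers k ≥ 1 and j with |j| ≤ k and j ≡ k (mod 2), the number of pairs (v,w) of lattice paths of length k with ±1 steps, starting at v(0)=w(0)=0, ending at v(k)=w(k)=j, and satisfying v(i) ≥ w(i) for all 0 ≤ i ≤ k, equals C(k,j). -/
/-
The count `N_k(x, y)` of ordered pairs of walks starting at `x ≥ y` and ending at `a ≥ b` satisfies,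
by conditioning on the first steps, `N_{k+1}(x, y) = ∑_{u, v = ±1} N_k(x + u, y + v)`.
The determinant `φ_k(a - x) φ_k(b - y) - φ_k(b - x - 2) φ_k(a - y + 2)` of free walk counts satisfies
the same recursion by bilinearity and has the same initial values. The only child leaving `y ≤ x`
is `y = x + 2`, where there are no pairs and the two products of the determinant coincide; so both
sides agree on `y ≤ x + 2` by induction on `k`.
-/

/-- Binomial coefficient with integer index, `0` for negative indices. -/
def intChoose (k : ℕ) (z : ℤ) : ℤ :=
  if z < 0 then 0 else (Nat.choose k z.toNat : ℤ)

/-- The Karlin–McGregor count: `C(k,j) = binom(k,(k+j)/2)² − binom(k,(k+j)/2−1)·binom(k,(k+j)/2+1)`. -/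
def KMcount (k : ℕ) (j : ℤ) : ℤ :=
  intChoose k ((k + j) / 2) ^ 2 -
    intChoose k ((k + j) / 2 - 1) * intChoose k ((k + j) / 2 + 1)

lemma intChoose_natCast (k n : ℕ) : intChoose k n = k.choose n := by
  simp [intChoose]

lemma intChoose_succ (k : ℕ) (m : ℤ) :
    intChoose (k + 1) m = intChoose k (m - 1) + intChoose k m := by
  rcases lt_trichotomy m 0 with hm | rfl | hm
  · simp [intChoose, hm, show m - 1 < 0 by omega]
  · simp [intChoose]
  · obtain ⟨n, rfl⟩ : ∃ n : ℕ, m = n + 1 := ⟨(m - 1).toNat, by omega⟩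
    rw [add_sub_cancel_right, ← Nat.cast_succ, intChoose_natCast, intChoose_natCast,
      intChoose_natCast, Nat.choose_succ_succ', Nat.cast_add]

def walkCount : ℕ → ℤ → ℤ
  | 0, d => if d = 0 then 1 else 0
  | k + 1, d => walkCount k (d - 1) + walkCount k (d + 1)

lemma walkCount_eq_intChoose (k : ℕ) (d m : ℤ) (h : k + d = 2 * m) :
    walkCount k d = intChoose k m := by
  induction k generalizing d m with
  | zero =>
    rcases lt_trichotomy m 0 with hm | rfl | hm
    · simp [walkCount, intChoose, hm]
      omega
    · simp [walkCount, intChoose]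
      omega
    · simp [walkCount, intChoose, show ¬ m < 0 by omega,
        Nat.choose_eq_zero_of_lt (show 0 < m.toNat by omega)]
      omega
  | succ k ih =>
    push_cast at h
    rw [walkCount, ih (d - 1) (m - 1) (by omega), ih (d + 1) m (by omega), intChoose_succ]

/-- The Karlin–McGregor determinant for `v` and `w - 2`, which never meet exactly when `w ≤ v`
(both walks having the same parity). -/
def karlinMcGregorDet (k : ℕ) (x y a b : ℤ) : ℤ :=
  walkCount k (a - x) * walkCount k (b - y) - walkCount k (b - x - 2) * walkCount k (a - y + 2)

lemma karlinMcGregorDet_succ (k : ℕ) (x y a b : ℤ) :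
    karlinMcGregorDet (k + 1) x y a b =
      ∑ uv : ℤˣ × ℤˣ, karlinMcGregorDet k (x + uv.1) (y + uv.2) a b := by
  simp only [karlinMcGregorDet, walkCount, Fintype.sum_prod_type, UnitsInt.univ,
    Finset.sum_pair (units_ne_neg_self 1), Units.val_one, Units.val_neg]
  ring_nf

lemma karlinMcGregorDet_self_add_two (k : ℕ) (x a b : ℤ) :
    karlinMcGregorDet k x (x + 2) a b = 0 := by
  rw [karlinMcGregorDet, sub_eq_zero, mul_comm]
  ring_nf

/-- The `±1` steps are encoded as the units of `ℤ`. -/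
def IsWalk (k : ℕ) (x a : ℤ) (v : Fin (k + 1) → ℤ) : Prop :=
  v 0 = x ∧ v (Fin.last k) = a ∧ ∀ i : Fin k, IsUnit (v i.succ - v i.castSucc)

def orderedWalkPairs (k : ℕ) (x y a b : ℤ) : Set ((Fin (k + 1) → ℤ) × (Fin (k + 1) → ℤ)) :=
  {p | IsWalk k x a p.1 ∧ IsWalk k y b p.2 ∧ p.2 ≤ p.1}

lemma isWalk_cons_iff {k : ℕ} {x a c : ℤ} {v : Fin (k + 1) → ℤ} :
    IsWalk (k + 1) x a (Fin.cons c v) ↔ c = x ∧ IsUnit (v 0 - c) ∧ IsWalk k (v 0) a v := by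
  simp only [IsWalk, Fin.forall_fin_succ, ← Fin.succ_last, ← Fin.succ_castSucc, Fin.cons_succ,
    Fin.cons_zero, Fin.castSucc_zero]
  tauto

section

variable {k : ℕ} {x y a b : ℤ}

lemma orderedWalkPairs_succ (hyx : y ≤ x) :
    orderedWalkPairs (k + 1) x y a b =
      ⋃ uv : ℤˣ × ℤˣ,
        Prod.map (Fin.cons x) (Fin.cons y) '' orderedWalkPairs k (x + uv.1) (y + uv.2) a b := by
  ext ⟨v, w⟩
  rw [← Fin.cons_self_tail v, ← Fin.cons_self_tail w]
  simp only [orderedWalkPairs, Set.mem_ofPred_eq, isWalk_cons_iff, Fin.cons_le_cons,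
    Set.mem_iUnion, Set.mem_image, Prod.exists, Prod.map, Prod.mk.injEq, Fin.cons_inj]
  constructor
  · rintro ⟨⟨rfl, ⟨u, hu⟩, hv⟩, ⟨rfl, ⟨u', hu'⟩, hw⟩, -, hle⟩
    exact ⟨u, u', _, _, ⟨by rwa [hu, add_sub_cancel], by rwa [hu', add_sub_cancel], hle⟩,
      ⟨rfl, rfl⟩, rfl, rfl⟩
  · rintro ⟨u, u', _, _, ⟨hv, hw, hle⟩, ⟨rfl, rfl⟩, rfl, rfl⟩
    rw [hv.1, hw.1]
    simp [hv, hw, hyx, hle]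

lemma orderedWalkPairs_eq_empty (hxy : x < y) : orderedWalkPairs k x y a b = ∅ := by
  refine Set.eq_empty_of_forall_notMem ?_
  rintro p ⟨⟨hv, -⟩, ⟨hw, -⟩, hle⟩
  linarith [hle 0]

lemma orderedWalkPairs_zero_subset :
    orderedWalkPairs 0 x y a b ⊆ {(fun _ ↦ x, fun _ ↦ y)} := by
  rintro p ⟨⟨hv, -⟩, ⟨hw, -⟩, -⟩
  ext i <;> rw [Fin.eq_zero i]
  exacts [hv, hw]

lemma orderedWalkPairs_finite (k : ℕ) (x y a b : ℤ) : (orderedWalkPairs k x y a b).Finite := by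
  induction k generalizing x y with
  | zero => exact (Set.finite_singleton _).subset orderedWalkPairs_zero_subset
  | succ k ih =>
    rcases le_or_gt y x with hyx | hxy
    · rw [orderedWalkPairs_succ hyx]
      exact Set.finite_iUnion fun _ ↦ (ih _ _).image _
    · simp [orderedWalkPairs_eq_empty hxy]

lemma ncard_orderedWalkPairs_succ (hyx : y ≤ x) :
    (orderedWalkPairs (k + 1) x y a b).ncard =
      ∑ uv : ℤˣ × ℤˣ, (orderedWalkPairs k (x + uv.1) (y + uv.2) a b).ncard := by
  have hinj := (Fin.cons_right_injective (n := k + 1) (α := fun _ ↦ ℤ) x).prodMap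
    (Fin.cons_right_injective (n := k + 1) (α := fun _ ↦ ℤ) y)
  rw [orderedWalkPairs_succ hyx, Set.ncard_iUnion_of_finite
    (fun _ ↦ (orderedWalkPairs_finite ..).image _), finsum_eq_sum_of_fintype]
  · simp only [Set.ncard_image_of_injective _ hinj]
  · intro uv uv' hne
    refine Set.disjoint_left.2 ?_
    rintro _ ⟨p, hp, rfl⟩ ⟨q, hq, hpq⟩
    obtain rfl := hinj hpq
    exact hne (Prod.ext (Units.ext (add_left_cancel (hp.1.1.symm.trans hq.1.1)))
      (Units.ext (add_left_cancel (hp.2.1.1.symm.trans hq.2.1.1))))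

lemma ncard_orderedWalkPairs_zero :
    (orderedWalkPairs 0 x y a b).ncard = if x = a ∧ y = b ∧ y ≤ x then 1 else 0 := by
  split_ifs with h
  · obtain ⟨rfl, rfl, hyx⟩ := h
    rw [Set.ncard_eq_one]
    refine ⟨_, orderedWalkPairs_zero_subset.antisymm ?_⟩
    rw [Set.singleton_subset_iff]
    exact ⟨⟨rfl, rfl, fun i ↦ i.elim0⟩, ⟨rfl, rfl, fun i ↦ i.elim0⟩, fun _ ↦ hyx⟩
  · rw [Set.ncard_eq_zero (orderedWalkPairs_finite 0 x y a b)]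
    refine Set.eq_empty_of_forall_notMem ?_
    rintro p ⟨⟨hv, hva, -⟩, ⟨hw, hwb, -⟩, hle⟩
    exact h ⟨hv ▸ hva, hw ▸ hwb, hv ▸ hw ▸ hle 0⟩

end

/-- The case `y = x + 2`, where both sides vanish, is included so that the induction closes. -/
theorem ncard_orderedWalkPairs {a b : ℤ} (hba : b ≤ a) (k : ℕ) (x y : ℤ) (hxy : y ≤ x + 2)
    (hpar : Even (x - y)) :
    ((orderedWalkPairs k x y a b).ncard : ℤ) = karlinMcGregorDet k x y a b := by
  have hmod := Int.even_iff.1 hpar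
  induction k generalizing x y with
  | zero =>
    rw [ncard_orderedWalkPairs_zero]
    simp only [karlinMcGregorDet, walkCount]
    split_ifs <;> omega
  | succ k ih =>
    obtain hyx | rfl : y ≤ x ∨ y = x + 2 := by omega
    · rw [ncard_orderedWalkPairs_succ hyx, karlinMcGregorDet_succ, Nat.cast_sum]
      refine Finset.sum_congr rfl fun uv _ ↦ ?_
      have hu := Int.isUnit_iff.1 uv.1.isUnit
      have hv := Int.isUnit_iff.1 uv.2.isUnit
      exact ih _ _ (by omega) (Int.even_iff.2 (by omega)) (by omega)
    · rw [orderedWalkPairs_eq_empty (by omega), Set.ncard_empty, karlinMcGregorDet_self_add_two,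
        Nat.cast_zero]

theorem stmt_4_general (k : ℕ) (j : ℤ)
    (hpar : (j - (k : ℤ)) % 2 = 0) :
    (Set.ncard {p : (Fin (k + 1) → ℤ) × (Fin (k + 1) → ℤ) |
        p.1 0 = 0 ∧ p.2 0 = 0 ∧ p.1 (Fin.last k) = j ∧ p.2 (Fin.last k) = j ∧
        (∀ i : Fin k, p.1 i.succ - p.1 i.castSucc = 1 ∨ p.1 i.succ - p.1 i.castSucc = -1) ∧
        (∀ i : Fin k, p.2 i.succ - p.2 i.castSucc = 1 ∨ p.2 i.succ - p.2 i.castSucc = -1) ∧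
        (∀ i : Fin (k + 1), p.2 i ≤ p.1 i)} : ℤ) = KMcount k j := by
  obtain ⟨m, hm⟩ : ∃ m, (k : ℤ) + j = 2 * m := ⟨(k + j) / 2, by omega⟩
  calc _ = ((orderedWalkPairs k 0 0 j j).ncard : ℤ) := by
        congr 2
        ext p
        simp only [orderedWalkPairs, IsWalk, Int.isUnit_iff, Pi.le_def, Set.mem_ofPred_eq]
        tauto
    _ = karlinMcGregorDet k 0 0 j j := ncard_orderedWalkPairs le_rfl k 0 0 (by omega) (by simp)
    _ = KMcount k j := by
      rw [karlinMcGregorDet, KMcount, show ((k : ℤ) + j) / 2 = m by omega, sub_zero,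
        walkCount_eq_intChoose k j m hm, walkCount_eq_intChoose k (j - 2) (m - 1) (by omega),
        walkCount_eq_intChoose k (j + 2) (m + 1) (by omega)]
      ring

/-- The number of ordered pairs `(v,w)` of `±1`-step lattice paths of length `k`
from `0` to `j` with `v ≥ w` equals `C(k,j)`. -/
theorem stmt_4 (k : ℕ) (hk : 1 ≤ k) (j : ℤ) (hj : |j| ≤ (k : ℤ))
    (hpar : (j - (k : ℤ)) % 2 = 0) :
    (Set.ncard {p : (Fin (k + 1) → ℤ) × (Fin (k + 1) → ℤ) |
        p.1 0 = 0 ∧ p.2 0 = 0 ∧ p.1 (Fin.last k) = j ∧ p.2 (Fin.last k) = j ∧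
        (∀ i : Fin k, p.1 i.succ - p.1 i.castSucc = 1 ∨ p.1 i.succ - p.1 i.castSucc = -1) ∧
        (∀ i : Fin k, p.2 i.succ - p.2 i.castSucc = 1 ∨ p.2 i.succ - p.2 i.castSucc = -1) ∧
        (∀ i : Fin (k + 1), p.2 i ≤ p.1 i)} : ℤ) = KMcount k j :=
  stmt_4_general k j hpar
end

section
/- Modified Arzelà–Ascoli theorem: Let E be a separable metric space, (E_N) a sequence of subsets of E such that for every x ∈ E and ε > 0, dist(x, E_N) < ε for all large N, and suppose for each N there is a projection map π_N : E → E_N with d(x, π_N(x)) = dist(x, E_N). Let F_N : E_N → ℝ be uniformly bounded with common modulus of continuity ω (i.e. |F_N(x) − F_N(y)| ≤ ω(d(x,y)) for x,y ∈ E_N, where ω(δ) → 0 as δ → 0). Then there exist a bounded function F : E → ℝ with modulus of continuity bounded by ω(3·) and a subsequence (N_j) such that F_{N_j}(π_{N_j}(x)) → F(x) for every x ∈ E, and moreover sup_{x ∈ J ∩ E_{N_j}} |F(x) − F_{N_j}(x)| → 0 for every compact J ⊆ E. -/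
open Filter Set

/-- Modified Arzelà–Ascoli theorem: a uniformly bounded, uniformly equicontinuous
family `F_N : E_N → ℝ` admits a subsequence converging (via the projections `π_N`)
to a bounded function `F : E → ℝ` with modulus of continuity `ω(3·)`, uniformly on
compact subsets. -/
theorem stmt_6 {E : Type*} [MetricSpace E] [TopologicalSpace.SeparableSpace E]
    (EN : ℕ → Set E) (π : ℕ → E → E)
    (hπmem : ∀ N x, π N x ∈ EN N)
    (hπdist : ∀ N x, dist x (π N x) = Metric.infDist x (EN N))
    (happrox : ∀ (x : E) (ε : ℝ), 0 < ε → ∀ᶠ N in atTop, Metric.infDist x (EN N) < ε)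
    (F : ℕ → E → ℝ) (M : ℝ)
    (hbound : ∀ N, ∀ x ∈ EN N, |F N x| ≤ M)
    (ω : ℝ → ℝ) (hωmono : Monotone ω)
    (hω0 : Tendsto ω (nhdsWithin 0 (Set.Ioi 0)) (nhds 0))
    (hmod : ∀ N, ∀ x ∈ EN N, ∀ y ∈ EN N, |F N x - F N y| ≤ ω (dist x y)) :
    ∃ (G : E → ℝ) (φ : ℕ → ℕ), StrictMono φ ∧
      (∀ x, |G x| ≤ M) ∧
      (∀ x y, |G x - G y| ≤ ω (3 * dist x y)) ∧
      (∀ x, Tendsto (fun j => F (φ j) (π (φ j) x)) atTop (nhds (G x))) ∧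
      (∀ J : Set E, IsCompact J → ∀ ε : ℝ, 0 < ε →
        ∀ᶠ j in atTop, ∀ x ∈ J ∩ EN (φ j), |G x - F (φ j) x| ≤ ε) := by
  rcases isEmpty_or_nonempty E with hE | hE
  · exact ⟨fun _ => 0, id, strictMono_id, fun x => isEmptyElim x, fun x => isEmptyElim x,
      fun x => isEmptyElim x,
      fun J _ ε hε => Eventually.of_forall fun j x hx => isEmptyElim x⟩
  obtain ⟨e, he⟩ := TopologicalSpace.exists_dense_seq E
  obtain ⟨x₀⟩ := hE
  -- ω vanishes at 0
  have hω00 : ω 0 = 0 := by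
    have h2 : 0 ≤ ω 0 := by
      have := hmod 0 (π 0 x₀) (hπmem 0 x₀) (π 0 x₀) (hπmem 0 x₀)
      simpa using this
    have h1 : ω 0 ≤ 0 := by
      refine ge_of_tendsto hω0 ?_
      exact eventually_nhdsWithin_of_forall fun t ht => hωmono (le_of_lt ht)
    linarith
  -- smallness of ω near 0
  have hωsmall : ∀ ε : ℝ, 0 < ε → ∃ δ > 0, ∀ t, 0 ≤ t → t < δ → ω t < ε := by
    intro ε hε
    obtain ⟨δ, hδ, h⟩ := Metric.tendsto_nhdsWithin_nhds.mp hω0 ε hε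
    refine ⟨δ, hδ, fun t ht0 htδ => ?_⟩
    rcases eq_or_lt_of_le ht0 with rfl | ht0'
    · simpa [hω00] using hε
    · have := h (mem_Ioi.mpr ht0') (by
        rw [Real.dist_eq, sub_zero, abs_of_pos ht0']; exact htδ)
      rw [Real.dist_eq, sub_zero] at this
      exact lt_of_le_of_lt (le_abs_self _) this
  -- boundedness of the projected family
  have hgbd : ∀ N x, |F N (π N x)| ≤ M := fun N x => hbound N _ (hπmem N x)
  -- key oscillation estimate
  have hkey : ∀ (N : ℕ) (x y : E), |F N (π N x) - F N (π N y)| ≤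
      ω (dist x y + Metric.infDist x (EN N) + Metric.infDist y (EN N)) := by
    intro N x y
    refine (hmod N _ (hπmem N x) _ (hπmem N y)).trans (hωmono ?_)
    have h1 := dist_triangle4 (π N x) x y (π N y)
    rw [dist_comm (π N x) x, hπdist, hπdist] at h1
    linarith
  -- extract a subsequence converging on the dense set
  have hScomp : IsCompact (Set.pi Set.univ fun _ : ℕ => Set.Icc (-M) M) :=
    isCompact_univ_pi fun _ => isCompact_Icc
  have huS : ∀ N, (fun k => F N (π N (e k))) ∈ Set.pi Set.univ fun _ : ℕ => Set.Icc (-M) M :=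
    fun N k _ => Set.mem_Icc.mpr (abs_le.mp (hgbd N (e k)))
  obtain ⟨L, -, φ, hφ, hLtend⟩ := hScomp.tendsto_subseq huS
  have hL : ∀ k, Tendsto (fun j => F (φ j) (π (φ j) (e k))) atTop (nhds (L k)) := by
    intro k
    exact (tendsto_pi_nhds.mp hLtend k)
  -- approximation property along the subsequence
  have happ' : ∀ (x : E) (δ : ℝ), 0 < δ → ∀ᶠ j in atTop, Metric.infDist x (EN (φ j)) < δ :=
    fun x δ hδ => (hφ.tendsto_atTop).eventually (happrox x δ hδ)
  -- pointwise convergence everywhere via a Cauchy argument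
  have hcauchy : ∀ x : E, ∃ Lx : ℝ, Tendsto (fun j => F (φ j) (π (φ j) x)) atTop (nhds Lx) := by
    intro x
    apply cauchySeq_tendsto_of_complete
    rw [Metric.cauchySeq_iff]
    intro ε hε
    obtain ⟨δ, hδ, hωδ⟩ := hωsmall (ε/3) (by linarith)
    obtain ⟨k, hk⟩ := Metric.denseRange_iff.mp he x (δ/4) (by linarith)
    have hc : CauchySeq (fun j => F (φ j) (π (φ j) (e k))) := (hL k).cauchySeq
    have hev : ∀ᶠ j in atTop, Metric.infDist x (EN (φ j)) < δ/4 ∧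
        Metric.infDist (e k) (EN (φ j)) < δ/4 :=
      (happ' x _ (by linarith)).and (happ' (e k) _ (by linarith))
    obtain ⟨N1, hN1⟩ := eventually_atTop.mp hev
    obtain ⟨N2, hN2⟩ := Metric.cauchySeq_iff.mp hc (ε/3) (by linarith)
    refine ⟨max N1 N2, fun m hm n hn => ?_⟩
    have hclose : ∀ j, N1 ≤ j → |F (φ j) (π (φ j) x) - F (φ j) (π (φ j) (e k))| < ε/3 := by
      intro j hj
      obtain ⟨h1, h2⟩ := hN1 j hj
      refine lt_of_le_of_lt (hkey (φ j) x (e k)) (hωδ _ ?_ ?_)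
      · have := dist_nonneg (x := x) (y := e k)
        have := Metric.infDist_nonneg (x := x) (s := EN (φ j))
        have := Metric.infDist_nonneg (x := e k) (s := EN (φ j))
        linarith
      · linarith
    have hmx := hclose m (le_trans (le_max_left _ _) hm)
    have hnx := hclose n (le_trans (le_max_left _ _) hn)
    have hmn := hN2 m (le_trans (le_max_right _ _) hm) n (le_trans (le_max_right _ _) hn)
    rw [Real.dist_eq] at hmn ⊢
    have t1 := abs_sub_le (F (φ m) (π (φ m) x)) (F (φ m) (π (φ m) (e k))) (F (φ n) (π (φ n) x))
    have t2 := abs_sub_le (F (φ m) (π (φ m) (e k))) (F (φ n) (π (φ n) (e k))) (F (φ n) (π (φ n) x))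
    have t3 : |F (φ n) (π (φ n) (e k)) - F (φ n) (π (φ n) x)| < ε/3 := by
      rw [abs_sub_comm]; exact hnx
    linarith
  choose G hG using hcauchy
  refine ⟨G, φ, hφ, ?_, ?_, hG, ?_⟩
  · -- boundedness
    intro x
    exact le_of_tendsto ((hG x).abs) (Eventually.of_forall fun j => hgbd (φ j) x)
  · -- modulus of continuity
    intro x y
    rcases eq_or_ne x y with rfl | hxy
    · simp [hω00]
    · have hd : 0 < dist x y := dist_pos.mpr hxy
      refine le_of_tendsto (((hG x).sub (hG y)).abs) ?_
      filter_upwards [happ' x (dist x y) hd, happ' y (dist x y) hd] with j h1 h2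
      exact (hkey (φ j) x y).trans (hωmono (by linarith))
  · -- uniform convergence on compacts
    intro J hJ ε hε
    obtain ⟨δ, hδ, hωδ⟩ := hωsmall (ε/3) (by linarith)
    obtain ⟨t, htJ, hcover⟩ := hJ.elim_nhds_subcover (fun z => Metric.ball z (δ/4))
      (fun z _ => Metric.ball_mem_nhds z (by linarith))
    have hev1 : ∀ᶠ j in atTop, ∀ z ∈ t, |G z - F (φ j) (π (φ j) z)| ≤ ε/3 := by
      rw [eventually_all_finset]
      intro z _
      have := (hG z).eventually (Metric.closedBall_mem_nhds (G z) (show (0:ℝ) < ε/3 by linarith))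
      filter_upwards [this] with j hj
      rw [Real.dist_eq, abs_sub_comm] at hj
      exact hj
    have hev2 : ∀ᶠ j in atTop, ∀ z ∈ t, Metric.infDist z (EN (φ j)) < δ/4 := by
      rw [eventually_all_finset]
      intro z _
      exact happ' z _ (by linarith)
    filter_upwards [hev1, hev2] with j h1 h2
    intro x hx
    have hxEN : x ∈ EN (φ j) := hx.2
    have hπx : π (φ j) x = x := by
      have h := hπdist (φ j) x
      rw [Metric.infDist_zero_of_mem hxEN] at h
      exact (eq_of_dist_eq_zero h).symm
    obtain ⟨z, hzt, hzball⟩ := Set.mem_iUnion₂.mp (hcover hx.1)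
    rw [Metric.mem_ball] at hzball
    -- three estimates
    have e1 : |G x - G z| < ε/3 := by
      have hb : |G x - G z| ≤ ω (3 * dist x z) := by
        rcases eq_or_ne x z with rfl | hxz
        · simp [hω00]
        · have hd : 0 < dist x z := dist_pos.mpr hxz
          refine le_of_tendsto (((hG x).sub (hG z)).abs) ?_
          filter_upwards [happ' x (dist x z) hd, happ' z (dist x z) hd] with i hi1 hi2
          exact (hkey (φ i) x z).trans (hωmono (by linarith))
      refine lt_of_le_of_lt hb (hωδ _ (by positivity) (by linarith))
    have e2 : |G z - F (φ j) (π (φ j) z)| ≤ ε/3 := h1 z hzt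
    have e3 : |F (φ j) (π (φ j) z) - F (φ j) x| < ε/3 := by
      have hb := hkey (φ j) z x
      rw [hπx, Metric.infDist_zero_of_mem hxEN] at hb
      refine lt_of_le_of_lt hb (hωδ _ ?_ ?_)
      · have := Metric.infDist_nonneg (x := z) (s := EN (φ j))
        have := dist_nonneg (x := z) (y := x)
        linarith
      · have hzx : dist z x < δ/4 := by rw [dist_comm]; exact hzball
        have := h2 z hzt
        linarith
    have tt1 := abs_sub_le (G x) (G z) (F (φ j) x)
    have tt2 := abs_sub_le (G z) (F (φ j) (π (φ j) z)) (F (φ j) x)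
    linarith
end

section
/- Diagonal convergence of integrals: Let E be a separable metric space, E_N ⊆ E subsets, ψ : E → ℂ bounded continuous. Let F_N : E_N → ℝ be uniformly bounded functions such that for every subsequence there is a further subsequence (N_j) along which sup_{x ∈ J ∩ E_{N_j}}|F(x) − F_{N_j}(x)| → 0 for every compact J and F_{N_j}(π_{N_j}(x)) → F(x) pointwise, where F : E → ℝ is a fixed bounded continuous function. Suppose ρ_N are finite (complex) Borel measures supported on E_N converging weakly to a finite measure ρ on E, with the sequence (|ρ_N|) tight. Then ∫ F_N ψ dρ_N → ∫ F ψ dρ. -/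
/-!
Along a subsequence on which `F_N → F` uniformly on `J ∩ E_N` for compact `J`, split
`∫ (F_N - F) ψ dρ_N` over a compact `J` carrying all but `ε` of every `ρ_N` and over `Jᶜ`:
on `J`, where `ρ_N` lives on `E_N`, the integrand is uniformly small against bounded total
masses, and on `Jᶜ` it is bounded by `2 M ‖ψ‖` against mass at most `ε`. Since `F ψ` is bounded
continuous, `∫ F ψ dρ_N → ∫ F ψ dρ` by weak convergence. Every subsequence having such a further
subsequence, the whole sequence converges.
-/

open MeasureTheory Filter Set Topology BoundedContinuousFunction

theorem norm_ofReal_mul_le {E : Type*} [TopologicalSpace E] (ψ : E →ᵇ ℂ) {r c : ℝ}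
    (h : |r| ≤ c) (x : E) :
    ‖(r : ℂ) * ψ x‖ ≤ c * ‖ψ‖ := by
  rw [norm_mul, Complex.norm_real, Real.norm_eq_abs]
  exact mul_le_mul h (ψ.norm_coe_le_norm x) (norm_nonneg _) ((abs_nonneg _).trans h)

theorem tendsto_integral_rclike_of_forall_real {E 𝕜 ι : Type*} [TopologicalSpace E]
    [MeasurableSpace E] [OpensMeasurableSpace E] [RCLike 𝕜] {l : Filter ι}
    {μ : ι → Measure E} [∀ i, IsFiniteMeasure (μ i)] {ν : Measure E} [IsFiniteMeasure ν]
    (h : ∀ g : E →ᵇ ℝ, Tendsto (fun i => ∫ x, g x ∂μ i) l (𝓝 (∫ x, g x ∂ν))) (g : E →ᵇ 𝕜) :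
    Tendsto (fun i => ∫ x, g x ∂μ i) l (𝓝 (∫ x, g x ∂ν)) :=
  (FiniteMeasure.tendsto_iff_forall_integral_rclike_tendsto 𝕜
    (μs := fun i => ⟨μ i, inferInstance⟩) (μ := ⟨ν, inferInstance⟩)).1
    (FiniteMeasure.tendsto_iff_forall_integral_tendsto.2 h) g

section Tight

variable {E G : Type*} [MeasurableSpace E] [NormedAddCommGroup G] [NormedSpace ℝ G]

theorem norm_integral_le_of_norm_le_on {μ : Measure E} [IsFiniteMeasure μ] {f : E → G}
    {J : Set E} (hJ : MeasurableSet J) {ε C : ℝ} (hf : Integrable f μ)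
    (hC : ∀ᵐ x ∂μ, ‖f x‖ ≤ C) (hε : ∀ᵐ x ∂μ, x ∈ J → ‖f x‖ ≤ ε) :
    ‖∫ x, f x ∂μ‖ ≤ μ.real Jᶜ * C + ε * μ.real J :=
  calc ‖∫ x, f x ∂μ‖
      ≤ ‖∫ x, f x ∂μ - ∫ x in J, f x ∂μ‖ + ‖∫ x in J, f x ∂μ‖ := norm_le_norm_sub_add _ _
    _ ≤ μ.real Jᶜ * C + ε * μ.real J :=
      add_le_add (norm_integral_sub_setIntegral_le hC hJ hf)
        (norm_setIntegral_le_of_norm_le_const_ae' (measure_lt_top μ J) hε)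

variable [TopologicalSpace E] [T2Space E] [OpensMeasurableSpace E]

theorem tendsto_integral_zero_of_tight {ι : Type*} {l : Filter ι} {μ : ι → Measure E}
    [∀ i, IsFiniteMeasure (μ i)] {f : ι → E → G} {B C : ℝ}
    (hmass : ∀ᶠ i in l, (μ i).real univ ≤ B) (hf : ∀ i, AEStronglyMeasurable (f i) (μ i))
    (hC : ∀ i, ∀ᵐ x ∂μ i, ‖f i x‖ ≤ C)
    (htight : ∀ ε > 0, ∃ J, IsCompact J ∧ ∀ᶠ i in l, (μ i).real Jᶜ ≤ ε)
    (hunif : ∀ J, IsCompact J → ∀ ε > 0, ∀ᶠ i in l, ∀ᵐ x ∂μ i, x ∈ J → ‖f i x‖ ≤ ε) :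
    Tendsto (fun i => ∫ x, f i x ∂μ i) l (𝓝 0) := by
  refine NormedAddGroup.tendsto_nhds_zero.2 fun ε hε => ?_
  set δ := ε / (|B| + |C| + 1)
  have hδ : 0 < δ := by positivity
  obtain ⟨J, hJ, hJc⟩ := htight δ hδ
  filter_upwards [hmass, hJc, hunif J hJ δ hδ] with i hB hJc hJ'
  have hJB : (μ i).real J ≤ |B| :=
    (measureReal_mono (subset_univ J)).trans (hB.trans (le_abs_self B))
  calc ‖∫ x, f i x ∂μ i‖
      ≤ (μ i).real Jᶜ * C + δ * (μ i).real J :=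
        norm_integral_le_of_norm_le_on hJ.isClosed.measurableSet
          (.of_bound (hf i) C (hC i)) (hC i) hJ'
    _ ≤ δ * |C| + δ * |B| :=
        add_le_add ((mul_le_mul_of_nonneg_left (le_abs_self C) measureReal_nonneg).trans
          (mul_le_mul_of_nonneg_right hJc (abs_nonneg C))) (mul_le_mul_of_nonneg_left hJB hδ.le)
    _ = ε * ((|B| + |C|) / (|B| + |C| + 1)) := by ring
    _ < ε := mul_lt_of_lt_one_right hε ((div_lt_one (by positivity)).2 (by linarith))

theorem tendsto_integral_ofReal_mul_zero_of_tight {ι : Type*} {l : Filter ι}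
    {μ : ι → Measure E} [∀ i, IsFiniteMeasure (μ i)] {S : ι → Set E} (hS : ∀ i, μ i (S i)ᶜ = 0)
    {g : ι → E → ℝ} {B C : ℝ} (ψ : E →ᵇ ℂ) (hmass : ∀ᶠ i in l, (μ i).real univ ≤ B)
    (hg : ∀ i, AEStronglyMeasurable (fun x => (g i x : ℂ) * ψ x) (μ i))
    (hC : ∀ i x, |g i x| ≤ C)
    (htight : ∀ ε > 0, ∃ J, IsCompact J ∧ ∀ᶠ i in l, (μ i).real Jᶜ ≤ ε)
    (hunif : ∀ J, IsCompact J → ∀ ε > 0, ∀ᶠ i in l, ∀ x ∈ J ∩ S i, |g i x| ≤ ε) :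
    Tendsto (fun i => ∫ x, (g i x : ℂ) * ψ x ∂μ i) l (𝓝 0) := by
  refine tendsto_integral_zero_of_tight hmass hg
    (fun i => .of_forall fun x => norm_ofReal_mul_le ψ (hC i x) x) htight fun J hJ ε hε => ?_
  filter_upwards [hunif J hJ (ε / (‖ψ‖ + 1)) (by positivity)] with i hi
  filter_upwards [mem_ae_iff.2 (hS i)] with x hxS hxJ
  calc ‖(g i x : ℂ) * ψ x‖ ≤ ε / (‖ψ‖ + 1) * ‖ψ‖ := norm_ofReal_mul_le ψ (hi x ⟨hxJ, hxS⟩) x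
    _ ≤ ε := by
      rw [div_mul_eq_mul_div, div_le_iff₀ (by positivity)]
      nlinarith [norm_nonneg ψ]

end Tight

theorem stmt_7_general {E : Type*} [MetricSpace E]
    [MeasurableSpace E] [BorelSpace E]
    (EN : ℕ → Set E) (π : ℕ → E → E)
    (ψ : BoundedContinuousFunction E ℂ)
    (F : ℕ → E → ℝ) (M : ℝ) (hbound : ∀ N x, |F N x| ≤ M)
    (Flim : E → ℝ) (hFlimcont : Continuous Flim) (hFlimbdd : ∀ x, |Flim x| ≤ M)
    (hFsub : ∀ φ : ℕ → ℕ, StrictMono φ → ∃ φ' : ℕ → ℕ, StrictMono φ' ∧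
      (∀ J : Set E, IsCompact J → ∀ ε : ℝ, 0 < ε →
        ∀ᶠ j in atTop, ∀ x ∈ J ∩ EN (φ (φ' j)), |F (φ (φ' j)) x - Flim x| ≤ ε) ∧
      (∀ x, Tendsto (fun j => F (φ (φ' j)) (π (φ (φ' j)) x)) atTop (nhds (Flim x))))
    (ρN : ℕ → Measure E) (ρ : Measure E)
    [∀ N, IsFiniteMeasure (ρN N)] [IsFiniteMeasure ρ]
    (hsupp : ∀ N, (ρN N) (EN N)ᶜ = 0)
    (hweak : ∀ g : BoundedContinuousFunction E ℝ,
      Tendsto (fun N => ∫ x, g x ∂(ρN N)) atTop (nhds (∫ x, g x ∂ρ)))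
    (htight : ∀ ε : ℝ, 0 < ε → ∃ J : Set E, IsCompact J ∧
      ∀ᶠ N in atTop, ((ρN N) Jᶜ).toReal ≤ ε)
    (hmeas : ∀ N, AEStronglyMeasurable (fun x => (F N x : ℂ) * ψ x) (ρN N)) :
    Tendsto (fun N => ∫ x, (F N x : ℂ) * ψ x ∂(ρN N)) atTop
      (nhds (∫ x, (Flim x : ℂ) * ψ x ∂ρ)) := by
  let Φ : E →ᵇ ℂ := ofNormedAddCommGroup (fun x => (Flim x : ℂ))
    (Complex.continuous_ofReal.comp hFlimcont) M (by simpa using hFlimbdd) * ψ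
  have hsplit : ∀ N x, ((F N x - Flim x : ℝ) : ℂ) * ψ x = (F N x : ℂ) * ψ x - Φ x := by
    intro N x
    change _ = _ - Flim x * ψ x
    push_cast
    ring
  have hmass : ∀ᶠ N in atTop, (ρN N).real univ ≤ ρ.real univ + 1 := by
    have h := hweak (const E 1)
    simp only [const_apply', integral_const, smul_eq_mul, mul_one] at h
    exact h.eventually_le_const (lt_add_one _)
  refine tendsto_of_subseq_tendsto fun ns hns => ?_
  obtain ⟨ms, -, hnsms⟩ := strictMono_subseq_of_tendsto_atTop hns
  obtain ⟨φ', hφ', hunif, -⟩ := hFsub (ns ∘ ms) hnsms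
  have hσ := (hnsms.comp hφ').tendsto_atTop
  have hdiff := tendsto_integral_ofReal_mul_zero_of_tight (fun j => hsupp _)
    (g := fun j x => F (ns (ms (φ' j))) x - Flim x) (C := M + M) ψ (hσ.eventually hmass)
    (fun j => ((hmeas _).sub Φ.continuous.aestronglyMeasurable).congr
      (.of_forall fun x => (hsplit _ x).symm))
    (fun j x => (abs_sub _ _).trans (add_le_add (hbound _ x) (hFlimbdd x)))
    (fun ε hε => (htight ε hε).imp fun J hJ => ⟨hJ.1, hσ.eventually hJ.2⟩) hunif
  have hlim := hdiff.add ((tendsto_integral_rclike_of_forall_real hweak Φ).comp hσ)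
  simp only [zero_add, Function.comp_apply] at hlim
  refine ⟨ms ∘ φ', hlim.congr fun j => ?_⟩
  have hFψ : Integrable (fun x => (F (ns (ms (φ' j))) x : ℂ) * ψ x) (ρN _) :=
    .of_bound (hmeas _) _ (.of_forall fun x => norm_ofReal_mul_le ψ (hbound _ x) x)
  rw [Function.comp_apply, ← eq_sub_iff_add_eq, ← integral_sub hFψ (Φ.integrable _)]
  simp_rw [hsplit]

/-- Diagonal convergence of integrals: if `F_N` (uniformly bounded, supported on `E_N`)
converges to `F` along further subsequences of every subsequence (uniformly on compacts
and pointwise through the projections), `ψ` is bounded continuous, and `ρ_N → ρ` weakly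
with `(ρ_N)` tight and `ρ_N` supported on `E_N`, then `∫ F_N ψ dρ_N → ∫ F ψ dρ`. -/
theorem stmt_7 {E : Type*} [MetricSpace E] [TopologicalSpace.SeparableSpace E]
    [MeasurableSpace E] [BorelSpace E]
    (EN : ℕ → Set E) (π : ℕ → E → E) (hπmem : ∀ N x, π N x ∈ EN N)
    (hπdist : ∀ N x, dist x (π N x) = Metric.infDist x (EN N))
    (ψ : BoundedContinuousFunction E ℂ)
    (F : ℕ → E → ℝ) (M : ℝ) (hbound : ∀ N x, |F N x| ≤ M)
    (Flim : E → ℝ) (hFlimcont : Continuous Flim) (hFlimbdd : ∀ x, |Flim x| ≤ M)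
    (hFsub : ∀ φ : ℕ → ℕ, StrictMono φ → ∃ φ' : ℕ → ℕ, StrictMono φ' ∧
      (∀ J : Set E, IsCompact J → ∀ ε : ℝ, 0 < ε →
        ∀ᶠ j in atTop, ∀ x ∈ J ∩ EN (φ (φ' j)), |F (φ (φ' j)) x - Flim x| ≤ ε) ∧
      (∀ x, Tendsto (fun j => F (φ (φ' j)) (π (φ (φ' j)) x)) atTop (nhds (Flim x))))
    (ρN : ℕ → Measure E) (ρ : Measure E)
    [∀ N, IsFiniteMeasure (ρN N)] [IsFiniteMeasure ρ]
    (hsupp : ∀ N, (ρN N) (EN N)ᶜ = 0)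
    (hweak : ∀ g : BoundedContinuousFunction E ℝ,
      Tendsto (fun N => ∫ x, g x ∂(ρN N)) atTop (nhds (∫ x, g x ∂ρ)))
    (htight : ∀ ε : ℝ, 0 < ε → ∃ J : Set E, IsCompact J ∧
      ∀ᶠ N in atTop, ((ρN N) Jᶜ).toReal ≤ ε)
    (hmeas : ∀ N, AEStronglyMeasurable (fun x => (F N x : ℂ) * ψ x) (ρN N)) :
    Tendsto (fun N => ∫ x, (F N x : ℂ) * ψ x ∂(ρN N)) atTop
      (nhds (∫ x, (Flim x : ℂ) * ψ x ∂ρ)) :=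
  stmt_7_general EN π ψ F M hbound Flim hFlimcont hFlimbdd hFsub ρN ρ hsupp hweak htight hmeas
end
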